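/- arXiv:1905.07329 — 6 statements merged into one kernel-verified Lean document; each statement's English description precedes it below -/
import Mathlib

section
/- Let n ≥ 4. If the simplex Δ_{n−1} on n vertices collapses to a complex Y with dim Y ≥ n − 3, then Y has at least one free face. In other words, no collapsing sequence of the simplex on n vertices gets stuck at dimension at least n − 3. -/
/-- A simplicial complex: a collection of finite subsets of the vertex type,
closed under taking subsets. -/
def IsComplex {V : Type*} [DecidableEq V] (X : Set (Finset V)) : Prop :=
  ∀ σ ∈ X, ∀ τ : Finset V, τ ⊆ σ → τ ∈ X

/-- `τ` is a free face of `X`, with `σ` the unique face of `X` properly containing `τ`. -/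
def IsFreeFace {V : Type*} [DecidableEq V] (X : Set (Finset V)) (τ σ : Finset V) : Prop :=
  τ ∈ X ∧ τ.Nonempty ∧ σ ∈ X ∧ τ ⊂ σ ∧ ∀ ρ ∈ X, τ ⊂ ρ → ρ = σ

/-- `X` has a free face. -/
def HasFreeFace {V : Type*} [DecidableEq V] (X : Set (Finset V)) : Prop :=
  ∃ τ σ, IsFreeFace X τ σ

/-- An elementary collapse: remove a free face `τ` together with the unique face `σ`
properly containing it. -/
def CollapseStep {V : Type*} [DecidableEq V] (X Y : Set (Finset V)) : Prop :=
  ∃ τ σ, IsFreeFace X τ σ ∧ Y = X \ {τ, σ}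

/-- `X` collapses to `Y` via a finite sequence of elementary collapses. -/
def CollapsesTo {V : Type*} [DecidableEq V] (X Y : Set (Finset V)) : Prop :=
  Relation.ReflTransGen CollapseStep X Y

/-- `X` has dimension exactly `d`: some face has `d + 1` vertices, and
every face has at most `d + 1` vertices. -/
def Dim {V : Type*} [DecidableEq V] (X : Set (Finset V)) (d : ℕ) : Prop :=
  (∃ σ ∈ X, σ.card = d + 1) ∧ ∀ σ ∈ X, σ.card ≤ d + 1

/-!
Encode a face by its complement. Along any collapse of the simplex, the missing faces
`V \ {v}` stay linked by missing faces `V \ {u, v}`: when `V \ {v}` disappears it is paired with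
a free face `V \ {v, w}`, and `V \ {w}` must already have been missing. Once the full simplex
is gone, some `V \ {v}` is missing.

Now let `Y` have no free face. A present `V \ {z}` would have the free face `V \ {z, v}` for a
missing `V \ {v}`, so every `V \ {z}` is missing and the face with at least `n - 2` vertices is
some `V \ {a, b}`. If `V \ {a, c}` is present and `b ∉ {a, c}`, then `V \ {a, b, c}` is free
unless `V \ {a, b}` or `V \ {b, c}` is present; so "`V \ {a, b}` is missing" is transitive, and
the link between `a` and `b` makes `V \ {a, b}` missing, a contradiction.
-/

open Finset

section

variable {V : Type*} [DecidableEq V]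

theorem IsFreeFace.exists_eq_insert {X : Set (Finset V)} {τ σ : Finset V} (hX : IsComplex X)
    (h : IsFreeFace X τ σ) : ∃ w ∉ τ, σ = insert w τ := by
  obtain ⟨-, -, hσ, hτσ, huniq⟩ := h
  obtain ⟨w, hwσ, hwτ⟩ := exists_of_ssubset hτσ
  have hwτX : insert w τ ∈ X := hX σ hσ _ (insert_subset hwσ hτσ.subset)
  exact ⟨w, hwτ, (huniq _ hwτX (ssubset_insert hwτ)).symm⟩

theorem IsComplex.diff_of_isFreeFace {X : Set (Finset V)} {τ σ : Finset V} (hX : IsComplex X)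
    (h : IsFreeFace X τ σ) : IsComplex (X \ {τ, σ}) := by
  obtain ⟨-, -, -, hτσ, huniq⟩ := h
  rintro ρ ⟨hρX, hρ⟩ π hπρ
  simp only [Set.mem_sdiff, Set.mem_insert_iff, Set.mem_singleton_iff, not_or] at hρ ⊢
  refine ⟨hX ρ hρX π hπρ, fun hπτ => ?_, fun hπσ => ?_⟩
  · subst hπτ
    exact hρ.2 (huniq ρ hρX (ssubset_of_subset_of_ne hπρ (Ne.symm hρ.1)))
  · subst hπσ
    exact hρ.2 (huniq ρ hρX (hτσ.trans_le hπρ))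

/-- Any face other than `σ` that properly contains `σ.erase x` contains some
`insert y (σ.erase x)` with `y ∉ σ`; if there were none, `σ.erase x` would be free. -/
theorem IsComplex.exists_insert_erase_mem {X : Set (Finset V)} (hX : IsComplex X)
    (hfree : ¬ HasFreeFace X) {σ : Finset V} (hσ : σ ∈ X) {x : V} (hx : x ∈ σ)
    (hcard : 1 < σ.card) : ∃ y ∉ σ, insert y (σ.erase x) ∈ X := by
  by_contra! hnone
  refine hfree ⟨σ.erase x, σ, hX σ hσ _ (erase_subset x σ),
    (one_lt_card_iff_nontrivial.mp hcard).erase_nonempty, hσ, erase_ssubset hx, ?_⟩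
  intro ρ hρ hxρ
  by_cases hρσ : ρ ⊆ σ
  · have := card_lt_card hxρ
    rw [card_erase_of_mem hx] at this
    exact eq_of_subset_of_card_le hρσ (by omega)
  · obtain ⟨y, hyρ, hyσ⟩ := not_subset.mp hρσ
    exact absurd (hX ρ hρ _ (insert_subset hyρ hxρ.subset)) (hnone y hyσ)

variable [Fintype V]

theorem insert_erase_compl_insert {a b : V} {s : Finset V} (ha : a ∉ s) (hab : a ≠ b) :
    insert a ((insert a s)ᶜ.erase b) = (insert b s)ᶜ := by
  ext x
  by_cases hxa : x = a <;> simp_all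

theorem exists_eq_compl_pair_of_card_le {σ : Finset V} (hσ : σ ≠ univ)
    (hcard : Fintype.card V ≤ σ.card + 2) : ∃ a b : V, σ = ({a, b} : Finset V)ᶜ := by
  have hpos : 0 < σᶜ.card := by
    rw [card_pos, nonempty_iff_ne_empty, Ne, compl_eq_empty_iff]
    exact hσ
  have hle : σᶜ.card ≤ 2 := by rw [card_compl]; omega
  obtain ⟨a, b, hab⟩ : ∃ a b : V, σᶜ = {a, b} := by
    rcases (by omega : σᶜ.card = 1 ∨ σᶜ.card = 2) with h1 | h2
    · obtain ⟨a, ha⟩ := card_eq_one.mp h1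
      exact ⟨a, a, by simp [ha]⟩
    · obtain ⟨a, b, -, hab⟩ := card_eq_two.mp h2
      exact ⟨a, b, hab⟩
  exact ⟨a, b, by rw [← hab, compl_compl]⟩

def FacetMissing (X : Set (Finset V)) (v : V) : Prop := ({v} : Finset V)ᶜ ∉ X

def RidgeMissing (X : Set (Finset V)) (a b : V) : Prop := ({a, b} : Finset V)ᶜ ∉ X

instance (X : Set (Finset V)) : Std.Symm (RidgeMissing X) :=
  ⟨fun a b h => by rwa [RidgeMissing, pair_comm]⟩

theorem ridgeMissing_self {X : Set (Finset V)} {v : V} :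
    RidgeMissing X v v ↔ FacetMissing X v := by
  simp [RidgeMissing, FacetMissing]

def CollapseInvariant (X : Set (Finset V)) : Prop :=
  IsComplex X ∧ ((univ : Finset V) ∉ X → ∃ v, FacetMissing X v) ∧
    ∀ u v, FacetMissing X u → FacetMissing X v → Relation.ReflTransGen (RidgeMissing X) u v

theorem collapseInvariant_univ : CollapseInvariant (Set.univ : Set (Finset V)) :=
  ⟨fun _ _ _ _ => Set.mem_univ _, fun h => absurd (Set.mem_univ _) h,
    fun _ _ hu => absurd (Set.mem_univ _) hu⟩

/-- A codimension-one face that disappears in an elementary collapse is either the free face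
itself, which happens only in the first collapse of the full simplex, or the larger face
`V \ {u}`, in which case the free face is some `V \ {u, w}` and `V \ {w}` was already missing. -/
theorem IsFreeFace.exists_ridgeMissing_or_eq {X : Set (Finset V)} {τ σ : Finset V}
    (hX : IsComplex X) (hfree : IsFreeFace X τ σ) {u : V}
    (hu : FacetMissing (X \ {τ, σ}) u) :
    (∃ w, FacetMissing X w ∧ Relation.ReflTransGen (RidgeMissing (X \ {τ, σ})) u w) ∨
      ∀ v, FacetMissing (X \ {τ, σ}) v → v = u := by
  by_cases hXu : FacetMissing X u
  · exact Or.inl ⟨u, hXu, .refl⟩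
  have hτσ : ({u} : Finset V)ᶜ = τ ∨ ({u} : Finset V)ᶜ = σ := by
    by_contra h
    exact hu ⟨not_not.mp hXu, h⟩
  obtain ⟨w, hwτ, hσ⟩ := hfree.exists_eq_insert hX
  obtain ⟨-, -, hσX, -, huniq⟩ := hfree
  rcases hτσ with hτ | hσu
  · subst hτ
    have hwu : w = u := by simpa using hwτ
    subst hwu
    have hσuniv : σ = univ := by rw [hσ, ← compl_erase, erase_singleton, compl_empty]
    refine Or.inr fun v hv => ?_
    have hvX : ({v} : Finset V)ᶜ ∈ X := hX σ hσX _ (hσuniv ▸ subset_univ _)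
    have : ({v} : Finset V)ᶜ = {w}ᶜ ∨ ({v} : Finset V)ᶜ = σ := by
      by_contra h
      exact hv ⟨hvX, h⟩
    rcases this with h | h
    · simpa using h
    · simp [hσuniv] at h
  · have hwu : w ≠ u := by
      have : w ∈ ({u} : Finset V)ᶜ := hσu ▸ hσ ▸ mem_insert_self w τ
      simpa using this
    have hτ : τ = ({w, u} : Finset V)ᶜ := by
      rw [compl_insert, hσu, hσ, erase_insert hwτ]
    refine Or.inl ⟨w, fun hwX => hwu ?_, .single fun hY => hY.2 ?_⟩
    · have hτw : τ ⊂ ({w} : Finset V)ᶜ := by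
        rw [hτ, compl_ssubset_compl, pair_comm]
        exact ssubset_insert (by simpa using hwu.symm)
      simpa [← hσu] using huniq _ hwX hτw
    · simp [hτ, pair_comm]

theorem CollapseInvariant.diff_of_isFreeFace {X : Set (Finset V)} {τ σ : Finset V}
    (hI : CollapseInvariant X) (hfree : IsFreeFace X τ σ) :
    CollapseInvariant (X \ {τ, σ}) := by
  obtain ⟨hX, hnonempty, hconn⟩ := hI
  have hmono : RidgeMissing X ≤ RidgeMissing (X \ {τ, σ}) := fun _ _ h hY => h hY.1
  refine ⟨hX.diff_of_isFreeFace hfree, fun huniv => ?_, fun u v hu hv => ?_⟩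
  · by_cases hXuniv : (univ : Finset V) ∈ X
    · obtain ⟨w, hwτ, hσ⟩ := hfree.exists_eq_insert hX
      obtain ⟨-, -, -, hτσ, huniq⟩ := hfree
      have hσuniv : σ = univ := (huniq _ hXuniv (hτσ.trans_le (subset_univ σ))).symm
      refine ⟨w, fun hY => hY.2 (Or.inl ?_)⟩
      rw [compl_singleton, ← hσuniv, hσ, erase_insert hwτ]
    · obtain ⟨v, hv⟩ := hnonempty hXuniv
      exact ⟨v, fun hY => hv hY.1⟩
  rcases hfree.exists_ridgeMissing_or_eq hX hu with ⟨w, hw, huw⟩ | huniq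
  · rcases hfree.exists_ridgeMissing_or_eq hX hv with ⟨w', hw', hvw'⟩ | hvuniq
    · have hww' := Relation.ReflTransGen.mono hmono _ _ (hconn w w' hw hw')
      exact huw.trans (hww'.trans (Std.Symm.symm _ _ hvw'))
    · rw [hvuniq u hu]
  · rw [huniq v hv]

theorem CollapsesTo.collapseInvariant {Y : Set (Finset V)}
    (h : CollapsesTo (Set.univ : Set (Finset V)) Y) : CollapseInvariant Y := by
  induction h with
  | refl => exact collapseInvariant_univ
  | tail _ hstep ih =>
    obtain ⟨τ, σ, hfree, rfl⟩ := hstep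
    exact ih.diff_of_isFreeFace hfree

section Stuck

variable {Y : Set (Finset V)} (hY : IsComplex Y) (hfree : ¬ HasFreeFace Y)
include hY hfree

theorem univ_notMem_of_not_hasFreeFace (hV : 1 < Fintype.card V) : (univ : Finset V) ∉ Y := by
  intro huniv
  obtain ⟨x⟩ : Nonempty V := Fintype.card_pos_iff.mp (by omega)
  obtain ⟨y, hy, -⟩ := hY.exists_insert_erase_mem hfree huniv (mem_univ x) (by rwa [card_univ])
  exact hy (mem_univ y)

theorem facetMissing_of_not_hasFreeFace (hV : 2 < Fintype.card V) {v₀ : V}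
    (hv₀ : FacetMissing Y v₀) (z : V) : FacetMissing Y z := by
  intro hz
  have hzv : v₀ ≠ z := by rintro rfl; exact hv₀ hz
  obtain ⟨y, hy, hyY⟩ := hY.exists_insert_erase_mem hfree hz (x := v₀) (by simpa using hzv)
    (by rw [card_compl, card_singleton]; omega)
  obtain rfl : y = z := by simpa using hy
  have hface : insert y (({y} : Finset V)ᶜ.erase v₀) = ({v₀} : Finset V)ᶜ := by
    simpa using insert_erase_compl_insert (s := ∅) (notMem_empty y) hzv.symm
  exact hv₀ (hface ▸ hyY)

theorem ridgeMissing_trans_of_not_hasFreeFace (hV : 3 < Fintype.card V)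
    (hall : ∀ v, FacetMissing Y v) {a b c : V} (hab : RidgeMissing Y a b)
    (hbc : RidgeMissing Y b c) : RidgeMissing Y a c := by
  rcases eq_or_ne a c with rfl | hac
  · exact ridgeMissing_self.mpr (hall a)
  rcases eq_or_ne a b with rfl | hba
  · exact hbc
  rcases eq_or_ne b c with rfl | hbc'
  · exact hab
  intro hacY
  obtain ⟨y, hy, hyY⟩ := hY.exists_insert_erase_mem hfree hacY (x := b)
    (by simp [hba.symm, hbc'])
    (by rw [card_compl, card_pair hac]; omega)
  rcases (by simpa [or_iff_not_imp_left] using hy : y = a ∨ y = c) with rfl | rfl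
  · rw [insert_erase_compl_insert (by simpa using hac) hba] at hyY
    exact hbc hyY
  · rw [pair_comm, insert_erase_compl_insert (by simpa using hac.symm) hbc'.symm] at hyY
    exact Std.Symm.symm _ _ hab hyY

theorem ridgeMissing_of_reflTransGen_of_not_hasFreeFace (hV : 3 < Fintype.card V)
    (hall : ∀ v, FacetMissing Y v) {a b : V} (h : Relation.ReflTransGen (RidgeMissing Y) a b) :
    RidgeMissing Y a b := by
  induction h with
  | refl => exact ridgeMissing_self.mpr (hall a)
  | tail _ hcd ih => exact ridgeMissing_trans_of_not_hasFreeFace hY hfree hV hall ih hcd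

end Stuck

end

/-- If the simplex on `n ≥ 4` vertices collapses to a complex `Y` of dimension at least
`n - 3` (i.e. `Y` has a face with at least `n - 2` vertices), then `Y` has a free face. -/
theorem stmt_2 {V : Type*} [Fintype V] [DecidableEq V] (n : ℕ) (hn : 4 ≤ n)
    (hcard : Fintype.card V = n) (Y : Set (Finset V))
    (h : CollapsesTo (Set.univ : Set (Finset V)) Y)
    (hdim : ∃ σ ∈ Y, n - 2 ≤ σ.card) :
    HasFreeFace Y := by
  by_contra hfree
  obtain ⟨hY, hnonempty, hconn⟩ := h.collapseInvariant
  have huniv := univ_notMem_of_not_hasFreeFace hY hfree (by omega)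
  obtain ⟨v₀, hv₀⟩ := hnonempty huniv
  have hall := facetMissing_of_not_hasFreeFace hY hfree (by omega) hv₀
  obtain ⟨σ, hσY, hσcard⟩ := hdim
  obtain ⟨a, b, rfl⟩ :=
    exists_eq_compl_pair_of_card_le (fun hσ => huniv (hσ ▸ hσY)) (by omega)
  exact ridgeMissing_of_reflTransGen_of_not_hasFreeFace hY hfree (by omega) hall
    (hconn a b (hall a) (hall b)) hσY
end

section
/- Let X be a d-dimensional simplicial complex with d ≥ 1. Then X is d-collapsible if and only if X does not contain a d-dimensional core, i.e. if and only if there is no subcomplex L of X with dim L = d such that every (d − 1)-dimensional face of L is contained in at least two d-dimensional faces of L. -/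
/-- A `d`-dimensional core: a `d`-dimensional complex in which every `(d-1)`-dimensional
face is contained in at least two `d`-dimensional faces. -/
def IsCore {V : Type*} [DecidableEq V] (L : Set (Finset V)) (d : ℕ) : Prop :=
  Dim L d ∧ ∀ τ ∈ L, τ.card = d →
    ∃ σ₁ ∈ L, ∃ σ₂ ∈ L, σ₁ ≠ σ₂ ∧ σ₁.card = d + 1 ∧ σ₂.card = d + 1 ∧ τ ⊆ σ₁ ∧ τ ⊆ σ₂

/-! A core survives every collapse: restricted to the faces lying in its top-dimensional
faces, each of its smaller faces has two proper cofaces in the core, so none of them is ever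
free. Conversely, if the subcomplex spanned by the `d`-faces of `X` is not a core, some
`(d-1)`-face lies in exactly one `d`-face and is therefore free; collapsing it removes a
`d`-face, and induction on the number of `d`-faces finishes the proof. -/

section

variable {V : Type*}

def purePart (L : Set (Finset V)) (d : ℕ) : Set (Finset V) :=
  {ρ | ∃ σ ∈ L, σ.card = d + 1 ∧ ρ ⊆ σ}

def HasTwoCofaces (L : Set (Finset V)) (d : ℕ) : Prop :=
  ∀ τ ∈ L, τ.card ≤ d → ∃ σ₁ ∈ L, ∃ σ₂ ∈ L, σ₁ ≠ σ₂ ∧ τ ⊂ σ₁ ∧ τ ⊂ σ₂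

lemma isComplex_purePart [DecidableEq V] (L : Set (Finset V)) (d : ℕ) :
    IsComplex (purePart L d) :=
  fun _ ⟨σ, hσ, hσc, hρσ⟩ _ hτρ => ⟨σ, hσ, hσc, hτρ.trans hρσ⟩

lemma purePart_subset [DecidableEq V] {L : Set (Finset V)} (hL : IsComplex L) (d : ℕ) :
    purePart L d ⊆ L :=
  fun _ ⟨σ, hσ, _, hρσ⟩ => hL σ hσ _ hρσ

lemma mem_purePart {L : Set (Finset V)} {d : ℕ} {σ : Finset V} (hσ : σ ∈ L)
    (hσc : σ.card = d + 1) : σ ∈ purePart L d :=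
  ⟨σ, hσ, hσc, subset_rfl⟩

lemma dim_purePart [DecidableEq V] {X : Set (Finset V)} {d : ℕ} (hX : IsComplex X)
    (hb : ∀ σ ∈ X, σ.card ≤ d + 1) {σ : Finset V} (hσ : σ ∈ X) (hσc : σ.card = d + 1) :
    Dim (purePart X d) d :=
  ⟨⟨σ, mem_purePart hσ hσc, hσc⟩, fun ρ hρ => hb ρ (purePart_subset hX d hρ)⟩

lemma IsCore.hasTwoCofaces_purePart [DecidableEq V] {L : Set (Finset V)} {d : ℕ}
    (hL : IsComplex L) (hcore : IsCore L d) : HasTwoCofaces (purePart L d) d := by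
  rintro τ ⟨σ, hσ, hσc, hτσ⟩ hτc
  obtain ⟨τ', hττ', hτ'σ, hτ'c⟩ := Finset.exists_subsuperset_card_eq hτσ hτc (by omega)
  obtain ⟨σ₁, hσ₁, σ₂, hσ₂, hne, hc₁, hc₂, h₁, h₂⟩ := hcore.2 τ' (hL σ hσ τ' hτ'σ) hτ'c
  have proper {ρ : Finset V} (hρc : ρ.card = d + 1) (hτ'ρ : τ' ⊆ ρ) : τ ⊂ ρ :=
    (hττ'.trans hτ'ρ).ssubset_of_ne (by rintro rfl; omega)
  exact ⟨σ₁, mem_purePart hσ₁ hc₁, σ₂, mem_purePart hσ₂ hc₂, hne,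
    proper hc₁ h₁, proper hc₂ h₂⟩

lemma CollapsesTo.subset [DecidableEq V] {X Y : Set (Finset V)} (h : CollapsesTo X Y) :
    Y ⊆ X := by
  induction h with
  | refl => exact subset_rfl
  | tail _ step ih =>
    obtain ⟨τ, σ, _, rfl⟩ := step
    exact Set.sdiff_subset.trans ih

lemma CollapseStep.isComplex [DecidableEq V] {X Y : Set (Finset V)} (hX : IsComplex X)
    (h : CollapseStep X Y) : IsComplex Y := by
  obtain ⟨τ, σ, ⟨-, -, -, hτσ, huniq⟩, rfl⟩ := h
  rintro ρ ⟨hρ, hρn⟩ ρ' hρ'ρ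
  simp only [Set.mem_insert_iff, Set.mem_singleton_iff, not_or] at hρn
  refine ⟨hX ρ hρ ρ' hρ'ρ, ?_⟩
  have hτρ : ρ' = τ ∨ ρ' = σ → τ ⊂ ρ := by
    rintro (rfl | rfl)
    · exact hρ'ρ.ssubset_of_ne (Ne.symm hρn.1)
    · exact hτσ.trans_subset hρ'ρ
  exact fun hmem => hρn.2 (huniq ρ hρ (hτρ hmem))

lemma subset_of_collapseStep [DecidableEq V] {Z Z' L : Set (Finset V)} {d : ℕ}
    (hb : ∀ σ ∈ Z, σ.card ≤ d + 1) (hL : IsComplex L) (h2 : HasTwoCofaces L d)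
    (hLZ : L ⊆ Z) (h : CollapseStep Z Z') : L ⊆ Z' := by
  obtain ⟨τ, σ, ⟨-, -, hσ, hτσ, huniq⟩, rfl⟩ := h
  have hτ : τ ∉ L := by
    intro hτL
    have hτc : τ.card ≤ d := by
      have := Finset.card_lt_card hτσ
      have := hb σ hσ
      omega
    obtain ⟨σ₁, hσ₁, σ₂, hσ₂, hne, h₁, h₂⟩ := h2 τ hτL hτc
    exact hne ((huniq σ₁ (hLZ hσ₁) h₁).trans (huniq σ₂ (hLZ hσ₂) h₂).symm)
  intro ρ hρ
  refine ⟨hLZ hρ, ?_⟩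
  rintro (rfl | rfl)
  · exact hτ hρ
  · exact hτ (hL ρ hρ τ hτσ.subset)

lemma subset_of_collapsesTo [DecidableEq V] {X Y L : Set (Finset V)} {d : ℕ}
    (hb : ∀ σ ∈ X, σ.card ≤ d + 1) (hL : IsComplex L) (h2 : HasTwoCofaces L d)
    (hLX : L ⊆ X) (h : CollapsesTo X Y) : L ⊆ Y := by
  induction h with
  | refl => exact hLX
  | tail hXZ step ih =>
    exact subset_of_collapseStep (fun σ hσ => hb σ (CollapsesTo.subset hXZ hσ)) hL h2 ih step

lemma not_isCore_of_collapsesTo [DecidableEq V] {X Y L : Set (Finset V)} {d : ℕ}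
    (hb : ∀ σ ∈ X, σ.card ≤ d + 1) (h : CollapsesTo X Y) (hY : ∀ σ ∈ Y, σ.card ≤ d)
    (hLX : L ⊆ X) (hL : IsComplex L) : ¬ IsCore L d := by
  intro hcore
  obtain ⟨⟨σ, hσ, hσc⟩, -⟩ := hcore.1
  have hsub : purePart L d ⊆ Y :=
    subset_of_collapsesTo hb (isComplex_purePart L d) (hcore.hasTwoCofaces_purePart hL)
      ((purePart_subset hL d).trans hLX) h
  have := hY σ (hsub (mem_purePart hσ hσc))
  omega

lemma exists_isFreeFace_of_not_isCore [DecidableEq V] {X : Set (Finset V)} {d : ℕ}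
    (hd : 1 ≤ d) (hX : IsComplex X) (hb : ∀ σ ∈ X, σ.card ≤ d + 1) (hdim : Dim (purePart X d) d)
    (hnc : ¬ IsCore (purePart X d) d) :
    ∃ τ σ, IsFreeFace X τ σ ∧ σ.card = d + 1 := by
  simp only [IsCore, hdim, true_and, not_forall, not_exists, not_and] at hnc
  obtain ⟨τ, ⟨σ, hσ, hσc, hτσ⟩, hτc, hlonely⟩ := hnc
  have huniq : ∀ ρ ∈ X, τ ⊂ ρ → ρ = σ := by
    intro ρ hρ hτρ
    have hρc : ρ.card = d + 1 := by
      have := Finset.card_lt_card hτρ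
      have := hb ρ hρ
      omega
    by_contra hne
    exact hlonely σ (mem_purePart hσ hσc) ρ (mem_purePart hρ hρc) (Ne.symm hne) hσc hρc
      hτσ hτρ.subset
  exact ⟨τ, σ, ⟨hX σ hσ τ hτσ, Finset.card_pos.mp (by omega), hσ,
    hτσ.ssubset_of_ne (by rintro rfl; omega), huniq⟩, hσc⟩

lemma exists_collapsesTo_of_forall_not_isCore [DecidableEq V] [Finite V] {d : ℕ}
    (hd : 1 ≤ d) {X : Set (Finset V)} (hX : IsComplex X) (hb : ∀ σ ∈ X, σ.card ≤ d + 1)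
    (hnc : ∀ L ⊆ X, IsComplex L → ¬ IsCore L d) :
    ∃ Y, CollapsesTo X Y ∧ ∀ σ ∈ Y, σ.card ≤ d := by
  induction hn : {σ ∈ X | σ.card = d + 1}.ncard using Nat.strong_induction_on generalizing X
    with | _ n ih =>
  by_cases htop : ∃ σ ∈ X, σ.card = d + 1
  · obtain ⟨σ₀, hσ₀, hσ₀c⟩ := htop
    obtain ⟨τ, σ, hfree, hσc⟩ := exists_isFreeFace_of_not_isCore hd hX hb
      (dim_purePart hX hb hσ₀ hσ₀c) (hnc _ (purePart_subset hX d) (isComplex_purePart X d))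
    have hstep : CollapseStep X (X \ {τ, σ}) := ⟨τ, σ, hfree, rfl⟩
    have hfewer : {ρ ∈ X \ {τ, σ} | ρ.card = d + 1}.ncard < n := by
      refine hn ▸ Set.ncard_lt_ncard ⟨fun ρ hρ => ⟨hρ.1.1, hρ.2⟩, fun hsub => ?_⟩
      exact (hsub ⟨hfree.2.2.1, hσc⟩).1.2 (Or.inr rfl)
    obtain ⟨Y, hY, hYd⟩ := ih _ hfewer (hstep.isComplex hX) (fun ρ hρ => hb ρ hρ.1)
      (fun L hL => hnc L (hL.trans Set.sdiff_subset)) rfl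
    exact ⟨Y, Relation.ReflTransGen.head hstep hY, hYd⟩
  · refine ⟨X, Relation.ReflTransGen.refl, fun σ hσ => ?_⟩
    have := hb σ hσ
    have : σ.card ≠ d + 1 := fun h => htop ⟨σ, hσ, h⟩
    omega

end

/-- A `d`-dimensional complex is `d`-collapsible (collapses to a complex of dimension
less than `d`) if and only if it contains no `d`-dimensional core. -/
theorem stmt_5 {V : Type*} [Fintype V] [DecidableEq V] (d : ℕ) (hd : 1 ≤ d)
    (X : Set (Finset V)) (hX : IsComplex X) (hdim : Dim X d) :
    (∃ Y, CollapsesTo X Y ∧ ∀ σ ∈ Y, σ.card ≤ d) ↔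
      ¬ ∃ L, L ⊆ X ∧ IsComplex L ∧ IsCore L d := by
  constructor
  · rintro ⟨Y, hXY, hY⟩ ⟨L, hLX, hL, hcore⟩
    exact not_isCore_of_collapsesTo hdim.2 hXY hY hLX hL hcore
  · intro hnc
    exact exists_collapsesTo_of_forall_not_isCore hd hX hdim.2
      fun L hLX hL hcore => hnc ⟨L, hLX, hL, hcore⟩
end

section
/- Let X be a simplicial complex on ground set V, let τ be a free face of X with σ the unique face of X properly containing τ, and let X′ = X ∖ {τ, σ}. Then the Alexander dual (X′)* equals X* ∪ {V ∖ σ, V ∖ τ}, and this is an elementary anticollapse of X*: |V ∖ τ| = |V ∖ σ| + 1, V ∖ σ ∉ X*, and every subset of V ∖ τ of cardinality |V ∖ τ| − 1 other than V ∖ σ already belongs to X*. -/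
/-- The Alexander dual of a complex `X` on the (finite) ground set `V`:
all subsets `σ` of `V` whose complement is not a face of `X`. -/
def AlexanderDual {V : Type*} [Fintype V] [DecidableEq V] (X : Set (Finset V)) :
    Set (Finset V) :=
  {σ : Finset V | σᶜ ∉ X}

theorem mem_alexanderDual {V : Type*} [Fintype V] [DecidableEq V] {X : Set (Finset V)}
    {ρ : Finset V} : ρ ∈ AlexanderDual X ↔ ρᶜ ∉ X :=
  Iff.rfl

theorem alexanderDual_diff {V : Type*} [Fintype V] [DecidableEq V] (X S : Set (Finset V)) :
    AlexanderDual (X \ S) = AlexanderDual X ∪ compl '' S := by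
  ext ρ
  simp only [Set.mem_union, mem_alexanderDual, Set.mem_sdiff, Set.mem_compl_image]
  tauto

theorem compl_notMem_alexanderDual {V : Type*} [Fintype V] [DecidableEq V]
    {X : Set (Finset V)} {σ : Finset V} (hσ : σ ∈ X) : σᶜ ∉ AlexanderDual X := by
  simpa [mem_alexanderDual] using hσ

namespace IsFreeFace

variable {V : Type*} [DecidableEq V] {X : Set (Finset V)} {τ σ : Finset V}

/-- Any face between `τ` and `σ` must be `σ`, so `σ` adds a single vertex to `τ`. -/
theorem card_eq (hX : IsComplex X) (hfree : IsFreeFace X τ σ) : σ.card = τ.card + 1 := by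
  obtain ⟨-, -, hσX, hτσ, huniq⟩ := hfree
  obtain ⟨x, hxσ, hxτ⟩ := Finset.exists_of_ssubset hτσ
  have hσ : insert x τ = σ :=
    huniq _ (hX σ hσX _ (Finset.insert_subset hxσ hτσ.subset)) (Finset.ssubset_insert hxτ)
  rw [← hσ, Finset.card_insert_of_notMem hxτ]

theorem notMem_of_card_eq (hfree : IsFreeFace X τ σ) {π : Finset V} (hτπ : τ ⊆ π)
    (hπ : π.card = τ.card + 1) (hπσ : π ≠ σ) : π ∉ X := fun hπX =>
  hπσ (hfree.2.2.2.2 π hπX (Finset.ssubset_iff_subset_ne.2 ⟨hτπ, by rintro rfl; omega⟩))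

end IsFreeFace

/-- Removing a free pair `(τ, σ)` from `X` corresponds, on Alexander duals, to the
elementary anticollapse adding the pair `(σᶜ, τᶜ)`: the dual of `X \ {τ, σ}` is
`X* ∪ {σᶜ, τᶜ}`, where `|τᶜ| = |σᶜ| + 1`, `σᶜ ∉ X*`, and every subset of `τᶜ` of
cardinality `|τᶜ| - 1` other than `σᶜ` already belongs to `X*`. -/
theorem stmt_6 {V : Type*} [Fintype V] [DecidableEq V] (X : Set (Finset V))
    (hX : IsComplex X) (τ σ : Finset V) (hfree : IsFreeFace X τ σ) :
    AlexanderDual (X \ {τ, σ}) = AlexanderDual X ∪ {σᶜ, τᶜ} ∧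
    τᶜ.card = σᶜ.card + 1 ∧
    σᶜ ∉ AlexanderDual X ∧
    (∀ ρ ⊆ τᶜ, ρ.card + 1 = τᶜ.card → ρ ≠ σᶜ → ρ ∈ AlexanderDual X) := by
  refine ⟨?_, ?_, compl_notMem_alexanderDual hfree.2.2.1, ?_⟩
  · rw [alexanderDual_diff, Set.image_pair, Set.pair_comm]
  · have hσV := Finset.card_le_univ σ
    rw [hfree.card_eq hX] at hσV
    rw [Finset.card_compl, Finset.card_compl, hfree.card_eq hX]
    omega
  · intro ρ hρτ hρcard hρσ
    rw [mem_alexanderDual]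
    refine hfree.notMem_of_card_eq (Finset.subset_compl_comm.1 hρτ) ?_ ?_
    · have := Finset.card_le_univ τ
      rw [Finset.card_compl] at hρcard ⊢
      omega
    · rintro rfl
      exact hρσ (compl_compl ρ).symm
end

section
/- Let n ≥ 4 and let X be a simplicial complex on a ground set V with |V| = n and dim X = n − 3. Suppose the graph whose vertex set is V and whose edges are the 2-element faces of the Alexander dual X* is connected. Then X has a free face of dimension n − 4. -/
/-- The graph on the vertex set `V` whose edges are the 2-element faces of the
Alexander dual of `X`. -/
def dualGraph {V : Type*} [Fintype V] [DecidableEq V] (X : Set (Finset V)) :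
    SimpleGraph V where
  Adj u v := u ≠ v ∧ ({u, v} : Finset V) ∈ AlexanderDual X
  symm := by
    constructor
    intro u v h
    exact ⟨h.1.symm, by rw [Finset.pair_comm]; exact h.2⟩
  loopless := by
    constructor
    intro v h
    exact h.1 rfl

/-
The facets of `X` have `n - 2` vertices, so a facet is the complement `{a, b}ᶜ` of a non-edge
`ab` of the dual graph `G`, and `G` is not complete. Being connected, `G` then contains an
induced path `x - y - z`. The face `{x, y, z}ᶜ` (of dimension `n - 4`) lies in exactly three
sets of size `n - 2`, namely `{x, z}ᶜ`, `{x, y}ᶜ` and `{y, z}ᶜ`; the first is a face of `X` since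
`xz` is not an edge of `G`, the other two are not since `xy` and `yz` are. Hence `{x, y, z}ᶜ` is
free in `X`, with `{x, z}ᶜ` the unique face properly containing it.
-/

/-- Take the first three vertices of a shortest path from `a` to `b`. -/
theorem SimpleGraph.Connected.exists_adj_adj_not_adj {V : Type*} {G : SimpleGraph V}
    (hG : G.Connected) {a b : V} (hab : a ≠ b) (hnadj : ¬ G.Adj a b) :
    ∃ x y z, G.Adj x y ∧ G.Adj y z ∧ x ≠ z ∧ ¬ G.Adj x z := by
  obtain ⟨p, hp⟩ := (hG a b).exists_walk_length_eq_dist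
  match p, hp with
  | .nil, _ => exact absurd rfl hab
  | .cons h₁ .nil, _ => exact absurd h₁ hnadj
  | .cons h₁ (.cons h₂ r), hp =>
    simp only [SimpleGraph.Walk.length_cons] at hp
    refine ⟨a, _, _, h₁, h₂, ?_, ?_⟩
    · rintro rfl
      have := SimpleGraph.dist_le r
      omega
    · intro h
      have := SimpleGraph.dist_le (.cons h r)
      simp only [SimpleGraph.Walk.length_cons] at this
      omega

theorem Finset.eq_erase_of_ssubset_of_card_le {α : Type*} [DecidableEq α] {s t : Finset α}
    (hst : s ⊂ t) (hcard : t.card ≤ s.card + 1) : ∃ a ∈ t, s = t.erase a := by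
  obtain ⟨a, ha, hsub⟩ := Finset.ssubset_iff_exists_subset_erase.mp hst
  refine ⟨a, ha, Finset.eq_of_subset_of_card_le hsub ?_⟩
  rw [Finset.card_erase_of_mem ha]
  omega

section ComplementOfTriple

variable {V : Type*} [Fintype V] [DecidableEq V] {x y z : V}

theorem eq_compl_pair_of_compl_triple_ssubset (hxy : x ≠ y) (hxz : x ≠ z) (hyz : y ≠ z)
    {ρ : Finset V} (hρ : ({x, y, z} : Finset V)ᶜ ⊂ ρ) (hcard : ρ.card + 2 ≤ Fintype.card V) :
    ρ = {y, z}ᶜ ∨ ρ = {x, z}ᶜ ∨ ρ = {x, y}ᶜ := by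
  have htriple : ({x, y, z} : Finset V).card = 3 :=
    Finset.card_eq_three.mpr ⟨x, y, z, hxy, hxz, hyz, rfl⟩
  have hρc : ρᶜ ⊂ {x, y, z} := by simpa using Finset.compl_ssubset_compl.mpr hρ
  obtain ⟨w, hw, hρw⟩ := Finset.eq_erase_of_ssubset_of_card_le hρc (by
    rw [htriple, Finset.card_compl]; omega)
  rw [← compl_compl ρ, hρw]
  simp only [Finset.mem_insert, Finset.mem_singleton] at hw
  rcases hw with rfl | rfl | rfl
  · left; rw [Finset.erase_insert (by simp [hxy, hxz])]
  · right; left; rw [Finset.erase_insert_of_ne hxy, Finset.erase_insert (by simpa using hyz)]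
  · right; right
    rw [Finset.erase_insert_of_ne hxz, Finset.erase_insert_of_ne hyz, Finset.erase_singleton,
      Finset.insert_empty]

theorem isFreeFace_compl_triple {X : Set (Finset V)} (hX : IsComplex X)
    (hmax : ∀ ρ ∈ X, ρ.card + 2 ≤ Fintype.card V) (hxy : x ≠ y) (hxz : x ≠ z) (hyz : y ≠ z)
    (hne : ({x, y, z} : Finset V)ᶜ.Nonempty) (hxzX : {x, z}ᶜ ∈ X) (hxyX : {x, y}ᶜ ∉ X)
    (hyzX : {y, z}ᶜ ∉ X) :
    IsFreeFace X {x, y, z}ᶜ {x, z}ᶜ := by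
  have hsub : ({x, y, z} : Finset V)ᶜ ⊂ {x, z}ᶜ := by
    rw [Finset.compl_ssubset_compl, Finset.ssubset_iff]
    refine ⟨y, by simp [hxy.symm, hyz], fun v hv => ?_⟩
    simp only [Finset.mem_insert, Finset.mem_singleton] at hv ⊢
    tauto
  refine ⟨hX _ hxzX _ hsub.subset, hne, hxzX, hsub, fun ρ hρ hτρ => ?_⟩
  rcases eq_compl_pair_of_compl_triple_ssubset hxy hxz hyz hτρ (hmax ρ hρ) with rfl | rfl | rfl
  · exact absurd hρ hyzX
  · rfl
  · exact absurd hρ hxyX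

end ComplementOfTriple

/-- Let `n ≥ 4` and let `X` be a complex on `n` vertices of dimension `n - 3`. If the
graph of edges of the Alexander dual `X*` is connected, then `X` has a free face of
dimension `n - 4` (i.e. with `n - 3` vertices). -/
theorem stmt_9 {V : Type*} [Fintype V] [DecidableEq V] (n : ℕ) (hn : 4 ≤ n)
    (hcard : Fintype.card V = n) (X : Set (Finset V)) (hX : IsComplex X)
    (hdim : Dim X (n - 3)) (hconn : (dualGraph X).Connected) :
    ∃ τ σ, IsFreeFace X τ σ ∧ τ.card = n - 3 := by
  obtain ⟨⟨σ₀, hσ₀, hσ₀card⟩, hmax⟩ := hdim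
  obtain ⟨a, b, hab, hσ₀c⟩ : ∃ a b, a ≠ b ∧ σ₀ᶜ = {a, b} :=
    Finset.card_eq_two.mp (by rw [Finset.card_compl, hcard, hσ₀card]; omega)
  have hnadj : ¬ (dualGraph X).Adj a b := fun h => h.2 (by rw [← hσ₀c, compl_compl]; exact hσ₀)
  obtain ⟨x, y, z, hxy, hyz, hxz, hnxz⟩ := hconn.exists_adj_adj_not_adj hab hnadj
  have hτcard : ({x, y, z} : Finset V)ᶜ.card = n - 3 := by
    rw [Finset.card_compl, hcard, Finset.card_eq_three.mpr ⟨x, y, z, hxy.ne, hxz, hyz.ne, rfl⟩]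
  refine ⟨_, _, isFreeFace_compl_triple hX (fun ρ hρ => ?_) hxy.ne hxz hyz.ne ?_
    (not_not.mp fun h => hnxz ⟨hxz, h⟩) hxy.2 hyz.2, hτcard⟩
  · have := hmax ρ hρ
    omega
  · rw [← Finset.card_pos, hτcard]
    omega
end

section
/- (Patchwork theorem.) Let X be a simplicial complex, P its poset of nonempty faces ordered by inclusion, Q a partially ordered set, and φ : P → Q an order-preserving map. Suppose for every q ∈ Q there is an acyclic matching M_q on the Hasse diagram of X all of whose pairs consist of faces lying in the fiber φ^{-1}(q). Then the union of the matchings M_q over all q ∈ Q is an acyclic matching on the Hasse diagram of X. -/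
/-- An edge of the Hasse diagram of `X`: a pair `(τ, σ)` of nonempty faces with
`τ ⊂ σ` and `dim σ = dim τ + 1`. -/
def HasseEdge {W : Type*} [DecidableEq W] (X : Set (Finset W)) (τ σ : Finset W) : Prop :=
  τ ∈ X ∧ σ ∈ X ∧ τ.Nonempty ∧ τ ⊂ σ ∧ σ.card = τ.card + 1

/-- A matching on the Hasse diagram of `X`: a set of Hasse edges in which every face
occurs in at most one pair. -/
def IsMatching {W : Type*} [DecidableEq W] (X : Set (Finset W))
    (M : Set (Finset W × Finset W)) : Prop :=
  (∀ p ∈ M, HasseEdge X p.1 p.2) ∧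
  (∀ p ∈ M, ∀ q ∈ M, p ≠ q → p.1 ≠ q.1 ∧ p.1 ≠ q.2 ∧ p.2 ≠ q.1 ∧ p.2 ≠ q.2)

/-- The step relation of the directed graph `G_M`: Hasse edges not in `M` are oriented
upward, Hasse edges in `M` are oriented downward. -/
def MStep {W : Type*} [DecidableEq W] (X : Set (Finset W))
    (M : Set (Finset W × Finset W)) (γ δ : Finset W) : Prop :=
  (HasseEdge X γ δ ∧ (γ, δ) ∉ M) ∨ (HasseEdge X δ γ ∧ (δ, γ) ∈ M)

/-- `M` is an acyclic matching on the Hasse diagram of `X`: a matching such that the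
directed graph `G_M` has no directed cycle. -/
def IsAcyclicMatching {W : Type*} [DecidableEq W] (X : Set (Finset W))
    (M : Set (Finset W × Finset W)) : Prop :=
  IsMatching X M ∧ ∀ γ : Finset W, ¬ Relation.TransGen (MStep X M) γ γ

/-- A (nonempty) face of `X` is critical for `M` if it occurs in no pair of `M`. -/
def Critical {W : Type*} [DecidableEq W] (X : Set (Finset W))
    (M : Set (Finset W × Finset W)) (γ : Finset W) : Prop :=
  γ ∈ X ∧ γ.Nonempty ∧ ∀ p ∈ M, p.1 ≠ γ ∧ p.2 ≠ γ

namespace Relation.TransGen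

variable {α Q : Type*} {r : α → α → Prop} {f : α → Q} {a b : α}

theorem apply_le [Preorder Q] (hf : ∀ x y, r x y → f x ≤ f y) (h : TransGen r a b) :
    f a ≤ f b := by
  induction h with
  | single hab => exact hf _ _ hab
  | tail _ hcb ih => exact ih.trans (hf _ _ hcb)

theorem restrict_fiber [PartialOrder Q] (hf : ∀ x y, r x y → f x ≤ f y) (h : TransGen r a b)
    (hba : f b ≤ f a) : TransGen (fun x y => r x y ∧ f x = f a ∧ f y = f a) a b := by
  induction h with
  | single hab => exact single ⟨hab, rfl, le_antisymm hba (hf _ _ hab)⟩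
  | @tail c d hac hcd ih =>
    have hcd_le : f c ≤ f d := hf _ _ hcd
    have hc : f c = f a := le_antisymm (hcd_le.trans hba) (hac.apply_le hf)
    exact tail (ih hc.le) ⟨hcd, hc, le_antisymm hba (hc.symm.le.trans hcd_le)⟩

end Relation.TransGen

section Patchwork

variable {W Q : Type*} [DecidableEq W] {X : Set (Finset W)} {φ : Finset W → Q}
  {M : Q → Set (Finset W × Finset W)}

theorem isMatching_iUnion (hM : ∀ q, IsMatching X (M q))
    (hfib : ∀ q, ∀ p ∈ M q, φ p.1 = q ∧ φ p.2 = q) : IsMatching X (⋃ q, M q) := by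
  simp only [IsMatching, Set.mem_iUnion, forall_exists_index]
  refine ⟨fun p q hp => (hM q).1 p hp, fun p q₁ hp r q₂ hr hne => ?_⟩
  obtain rfl | hq := eq_or_ne q₁ q₂
  · exact (hM q₁).2 p hp r hr hne
  obtain ⟨hp₁, hp₂⟩ := hfib q₁ p hp
  obtain ⟨hr₁, hr₂⟩ := hfib q₂ r hr
  have hdiff : ∀ x y : Finset W, φ x = q₁ → φ y = q₂ → x ≠ y := by
    rintro x _ hx hy rfl
    exact hq (hx.symm.trans hy)
  exact ⟨hdiff _ _ hp₁ hr₁, hdiff _ _ hp₁ hr₂, hdiff _ _ hp₂ hr₁, hdiff _ _ hp₂ hr₂⟩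

theorem le_of_mStep_iUnion [Preorder Q]
    (hφ : ∀ γ ∈ X, ∀ δ ∈ X, γ.Nonempty → γ ⊆ δ → φ γ ≤ φ δ)
    (hfib : ∀ q, ∀ p ∈ M q, φ p.1 = q ∧ φ p.2 = q) {γ δ : Finset W}
    (h : MStep X (⋃ q, M q) γ δ) : φ γ ≤ φ δ := by
  rcases h with ⟨⟨hγ, hδ, hne, hsub, -⟩, -⟩ | ⟨-, hmem⟩
  · exact hφ γ hγ δ hδ hne hsub.subset
  · obtain ⟨q, hq⟩ := Set.mem_iUnion.1 hmem
    exact ((hfib q _ hq).2.trans (hfib q _ hq).1.symm).le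

theorem mStep_of_mStep_iUnion (hfib : ∀ q, ∀ p ∈ M q, φ p.1 = q ∧ φ p.2 = q) {q : Q}
    {γ δ : Finset W} (h : MStep X (⋃ q, M q) γ δ) (hδ : φ δ = q) : MStep X (M q) γ δ := by
  rcases h with ⟨he, hnot⟩ | ⟨he, hmem⟩
  · exact Or.inl ⟨he, fun hm => hnot (Set.mem_iUnion.2 ⟨q, hm⟩)⟩
  · obtain ⟨q', hq'⟩ := Set.mem_iUnion.1 hmem
    obtain rfl : q' = q := (hfib q' _ hq').1.symm.trans hδ
    exact Or.inr ⟨he, hq'⟩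

end Patchwork

theorem stmt_13_general {W : Type*} [DecidableEq W] {Q : Type*} [PartialOrder Q]
    (X : Set (Finset W)) (φ : Finset W → Q)
    (hφ : ∀ γ ∈ X, ∀ δ ∈ X, γ.Nonempty → γ ⊆ δ → φ γ ≤ φ δ)
    (M : Q → Set (Finset W × Finset W))
    (hM : ∀ q : Q, IsAcyclicMatching X (M q))
    (hfib : ∀ q : Q, ∀ p ∈ M q, φ p.1 = q ∧ φ p.2 = q) :
    IsAcyclicMatching X (⋃ q : Q, M q) := by
  refine ⟨isMatching_iUnion (fun q => (hM q).1) hfib, fun γ hcycle => ?_⟩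
  have hfiber := hcycle.restrict_fiber (fun _ _ h => le_of_mStep_iUnion hφ hfib h) le_rfl
  exact (hM (φ γ)).2 γ <|
    Relation.TransGen.mono (fun _ _ h => mStep_of_mStep_iUnion hfib h.1 h.2.2) _ _ hfiber

/-- Patchwork theorem: if `φ` is an order-preserving map from the poset of nonempty faces
of `X` to a poset `Q`, and for every `q ∈ Q` we have an acyclic matching `M q` all of
whose pairs lie in the fiber `φ⁻¹(q)`, then the union of the matchings `M q` is an
acyclic matching on the Hasse diagram of `X`. -/
theorem stmt_13 {W : Type*} [DecidableEq W] {Q : Type*} [PartialOrder Q]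
    (X : Set (Finset W)) (hX : IsComplex X) (φ : Finset W → Q)
    (hφ : ∀ γ ∈ X, ∀ δ ∈ X, γ.Nonempty → γ ⊆ δ → φ γ ≤ φ δ)
    (M : Q → Set (Finset W × Finset W))
    (hM : ∀ q : Q, IsAcyclicMatching X (M q))
    (hfib : ∀ q : Q, ∀ p ∈ M q, φ p.1 = q ∧ φ p.2 = q) :
    IsAcyclicMatching X (⋃ q : Q, M q) :=
  stmt_13_general X φ hφ M hM hfib
end

section
/- Let X be a simplicial complex on n vertices with ground set V, of dimension d, without free faces, that anticollapses to the simplex Δ_{n−1}. Let σ be a facet of X with dim σ ≥ 1, let v be a new vertex not in V, and let Y be the complex on V ∪ {v} obtained from X by deleting the facet σ and adding all faces ρ ∪ {v} for ρ a proper subset of σ (the cone with apex v over the boundary of σ). Then Y is a simplicial complex on n + 1 vertices that anticollapses to the simplex Δ_n on V ∪ {v} and has no free faces. -/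
/-- An elementary anticollapse on the ground set `G`: add a pair `τ ⊂ σ ⊆ G` with
`|σ| = |τ| + 1`, where `τ ∉ X` and every subset of `σ` of cardinality `|σ| - 1` other
than `τ` is already a face of `X`. -/
def AnticollapseStepOn {W : Type*} [DecidableEq W] (G : Finset W)
    (X Y : Set (Finset W)) : Prop :=
  ∃ τ σ : Finset W, σ ⊆ G ∧ τ ⊂ σ ∧ σ.card = τ.card + 1 ∧ τ ∉ X ∧
    (∀ ρ ⊆ σ, ρ.card + 1 = σ.card → ρ ≠ τ → ρ ∈ X) ∧
    Y = X ∪ {τ, σ}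

/-- The full simplex on the ground set `G`: all subsets of `G`. -/
def simplexOn {W : Type*} [DecidableEq W] (G : Finset W) : Set (Finset W) :=
  {σ : Finset W | σ ⊆ G}

/-- The complex obtained from `X` by deleting the facet `σ` and adding the cone with
apex `v` over the boundary of `σ` (a bistellar-0 flip / stacking move). -/
def stackMove {W : Type*} [DecidableEq W] (X : Set (Finset W)) (σ : Finset W) (v : W) :
    Set (Finset W) :=
  (X \ {σ}) ∪ {γ | ∃ ρ : Finset W, ρ ⊂ σ ∧ γ = insert v ρ}

/-!
Adding the pair `σ ⊂ v * σ` is an elementary anticollapse of the new complex `Y`, and gives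
`X ∪ v * σ`. An anticollapse `A ↝ B` on vertices disjoint from a simplex `w` lifts to
`K ∪ w * A ↝ K ∪ w * B` as soon as `K` contains the faces `(w - z) ∪ α`. With `w = ∅` this
turns `X` into the simplex on `V` next to the cone `v * σ`; with `w = {v}` it grows the cone
`v * σ` into `v * V`, since a full simplex anticollapses to any larger one.

A free face `τ` of `Y` avoiding `v` is free in `X`, with coface `σ` when `τ ⊂ σ` (its only
coface in `Y` is then `v * τ`). A face `v * ρ` has as cofaces the `v * ρ'` with
`ρ ⊂ ρ' ⊂ σ`, and there are either none or at least two of them.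
-/

namespace Finset

variable {W : Type*} [DecidableEq W]

lemma exists_erase_eq_of_card_add_one {ρ s : Finset W} (h : ρ ⊆ s) (hc : ρ.card + 1 = s.card) :
    ∃ z ∈ s, s.erase z = ρ :=
  covBy_iff_exists_erase.mp <|
    covBy_iff_card_sdiff_eq_one.mpr ⟨h, by rw [card_sdiff_of_subset h]; omega⟩

lemma subset_and_sdiff_eq_iff {w τ γ : Finset W} (h : Disjoint w τ) :
    w ⊆ γ ∧ γ \ w = τ ↔ γ = w ∪ τ := by
  refine ⟨fun ⟨hw, hγ⟩ => by rw [← hγ, union_sdiff_of_subset hw], ?_⟩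
  rintro rfl
  exact ⟨subset_union_left, union_sdiff_cancel_left h⟩

end Finset

section

open Finset Relation

variable {W : Type*} [DecidableEq W]

/-- The join `w * A`, i.e. the faces `w ∪ α` with `α ∈ A`; written through `γ \ w` so that
`α` is determined by the face. -/
def joinSimplex (w : Finset W) (A : Set (Finset W)) : Set (Finset W) :=
  {γ | w ⊆ γ ∧ γ \ w ∈ A}

@[simp]
lemma mem_joinSimplex {w γ : Finset W} {A : Set (Finset W)} :
    γ ∈ joinSimplex w A ↔ w ⊆ γ ∧ γ \ w ∈ A := Iff.rfl

@[simp]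
lemma joinSimplex_empty_left (A : Set (Finset W)) : joinSimplex ∅ A = A := by
  ext γ; simp

@[simp]
lemma joinSimplex_empty_right (w : Finset W) : joinSimplex w ∅ = ∅ := by
  ext γ; simp

@[simp]
lemma mem_simplexOn {G γ : Finset W} : γ ∈ simplexOn G ↔ γ ⊆ G := Iff.rfl

lemma simplexOn_insert (x : W) (T : Finset W) :
    simplexOn (insert x T) = simplexOn T ∪ joinSimplex {x} (simplexOn T) := by
  ext γ
  simp only [Set.mem_union, mem_simplexOn, mem_joinSimplex, singleton_subset_iff,
    sdiff_singleton_eq_erase, ← subset_insert_iff]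
  by_cases hx : x ∈ γ
  · simpa [hx] using fun h => h.trans (subset_insert x T)
  · simp [hx, subset_insert_iff_of_notMem hx]

lemma AnticollapseStepOn.mono {G G' : Finset W} {X Y : Set (Finset W)} (hG : G ⊆ G')
    (h : AnticollapseStepOn G X Y) : AnticollapseStepOn G' X Y := by
  obtain ⟨τ, σ, hσ, rest⟩ := h
  exact ⟨τ, σ, hσ.trans hG, rest⟩

lemma Relation.ReflTransGen.anticollapse_mono {G G' : Finset W} {X Y : Set (Finset W)}
    (h : ReflTransGen (AnticollapseStepOn G) X Y) (hG : G ⊆ G') :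
    ReflTransGen (AnticollapseStepOn G') X Y :=
  ReflTransGen.mono (fun _ _ => AnticollapseStepOn.mono hG) _ _ h

lemma AnticollapseStepOn.union_joinSimplex {U G w : Finset W} {K A B : Set (Finset W)}
    (hw : Disjoint w U) (hG : w ∪ U ⊆ G) (hK : ∀ α ⊆ U, ∀ z ∈ w, w.erase z ∪ α ∈ K)
    (hK' : ∀ α ⊆ U, w ∪ α ∉ K) (h : AnticollapseStepOn U A B) :
    AnticollapseStepOn G (K ∪ joinSimplex w A) (K ∪ joinSimplex w B) := by
  obtain ⟨τ, σ, hσU, hτσ, hcard, hτA, hfacets, rfl⟩ := h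
  have hwσ : Disjoint w σ := hw.mono_right hσU
  have hwτ : Disjoint w τ := hwσ.mono_right hτσ.subset
  refine ⟨w ∪ τ, w ∪ σ, (union_subset_union_right hσU).trans hG, ?_, ?_, ?_, ?_, ?_⟩
  · obtain ⟨x, hxσ, hxτ⟩ := exists_of_ssubset hτσ
    refine (ssubset_iff_of_subset (union_subset_union_right hτσ.subset)).mpr
      ⟨x, mem_union_right w hxσ, ?_⟩
    intro hx
    rcases mem_union.mp hx with hxw | hxτ'
    · exact disjoint_left.mp hwσ hxw hxσ
    · exact hxτ hxτ'
  · rw [card_union_of_disjoint hwσ, card_union_of_disjoint hwτ, hcard, add_assoc]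
  · rintro (hK'' | ⟨-, hτA'⟩)
    · exact hK' τ (hτσ.subset.trans hσU) hK''
    · exact hτA (by rwa [union_sdiff_cancel_left hwτ] at hτA')
  · intro ρ hρ hρcard hρτ
    obtain ⟨z, hz, rfl⟩ := exists_erase_eq_of_card_add_one hρ hρcard
    rw [erase_union_distrib] at hρτ ⊢
    rcases mem_union.mp hz with hzw | hzσ
    · left
      rw [erase_eq_of_notMem (disjoint_left.mp hwσ hzw)]
      exact hK σ hσU z hzw
    · right
      have hwσz : Disjoint w (σ.erase z) := hwσ.mono_right (erase_subset z σ)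
      rw [erase_eq_of_notMem (disjoint_right.mp hwσ hzσ)] at hρτ ⊢
      refine ⟨subset_union_left, ?_⟩
      rw [union_sdiff_cancel_left hwσz]
      refine hfacets _ (erase_subset z σ) (card_erase_add_one hzσ) ?_
      rintro rfl
      exact hρτ rfl
  · ext γ
    simp only [Set.mem_union, mem_joinSimplex, Set.mem_insert_iff, Set.mem_singleton_iff,
      ← subset_and_sdiff_eq_iff hwτ, ← subset_and_sdiff_eq_iff hwσ]
    tauto

lemma Relation.ReflTransGen.union_joinSimplex {U G w : Finset W} {K A B : Set (Finset W)}
    (hw : Disjoint w U) (hG : w ∪ U ⊆ G) (hK : ∀ α ⊆ U, ∀ z ∈ w, w.erase z ∪ α ∈ K)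
    (hK' : ∀ α ⊆ U, w ∪ α ∉ K) (h : ReflTransGen (AnticollapseStepOn U) A B) :
    ReflTransGen (AnticollapseStepOn G) (K ∪ joinSimplex w A) (K ∪ joinSimplex w B) :=
  ReflTransGen.lift (fun A => K ∪ joinSimplex w A)
    (fun _ _ => AnticollapseStepOn.union_joinSimplex hw hG hK hK') _ _ h

lemma Relation.ReflTransGen.simplexOn_union_cone {x : W} {T : Finset W} {A B : Set (Finset W)}
    (hx : x ∉ T) (h : ReflTransGen (AnticollapseStepOn T) A B) :
    ReflTransGen (AnticollapseStepOn (insert x T))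
      (simplexOn T ∪ joinSimplex {x} A) (simplexOn T ∪ joinSimplex {x} B) := by
  refine ReflTransGen.union_joinSimplex (disjoint_singleton_left.mpr hx) (insert_eq x T).ge
    ?_ ?_ h
  · intro α hα z hz
    rw [mem_singleton.mp hz, erase_singleton, empty_union]
    exact hα
  · intro α hα hxα
    exact hx (hxα (mem_union_left α (mem_singleton_self x)))

lemma Relation.ReflTransGen.simplexOn_insert_of_empty {T : Finset W}
    (hT : ReflTransGen (AnticollapseStepOn T) ∅ (simplexOn T)) (x : W) :
    ReflTransGen (AnticollapseStepOn (insert x T)) (simplexOn T) (simplexOn (insert x T)) := by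
  by_cases hx : x ∈ T
  · rw [insert_eq_of_mem hx]
  · simpa [← simplexOn_insert] using hT.simplexOn_union_cone hx

lemma anticollapse_empty_simplexOn {T : Finset W} (hT : T.Nonempty) :
    ReflTransGen (AnticollapseStepOn T) ∅ (simplexOn T) := by
  induction hT using Nonempty.cons_induction with
  | singleton a =>
    refine .single ⟨∅, {a}, subset_rfl, empty_ssubset.mpr (singleton_nonempty a), rfl,
      Set.notMem_empty ∅, ?_, ?_⟩
    · intro ρ hρ hρcard hρne
      rw [card_singleton, add_eq_right, card_eq_zero] at hρcard
      exact absurd hρcard hρne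
    · ext γ
      simp [subset_singleton_iff]
  | cons a s _ _ ih =>
    rw [cons_eq_insert]
    exact (ih.anticollapse_mono (subset_insert a s)).trans
      (ih.simplexOn_insert_of_empty a)

lemma anticollapse_simplexOn_of_subset {T U : Finset W} (hT : T.Nonempty) (hTU : T ⊆ U) :
    ReflTransGen (AnticollapseStepOn U) (simplexOn T) (simplexOn U) := by
  rw [← union_sdiff_of_subset hTU]
  generalize U \ T = D
  induction D using Finset.induction_on with
  | empty => rw [union_empty]
  | insert x D _ ih =>
    rw [union_insert]
    exact (ih.anticollapse_mono (subset_insert x _)).trans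
      ((anticollapse_empty_simplexOn (hT.mono subset_union_left)).simplexOn_insert_of_empty x)

section stackMove

variable {X : Set (Finset W)} {σ : Finset W} {v : W}

lemma mem_stackMove {γ : Finset W} :
    γ ∈ stackMove X σ v ↔ (γ ∈ X ∧ γ ≠ σ) ∨ (v ∈ γ ∧ γ.erase v ⊂ σ) := by
  simp only [stackMove, Set.mem_union, Set.mem_sdiff, Set.mem_singleton_iff, Set.mem_ofPred_eq]
  refine or_congr_right ⟨?_, fun ⟨hv, hγ⟩ => ⟨γ.erase v, hγ, (insert_erase hv).symm⟩⟩
  rintro ⟨ρ, hρ, rfl⟩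
  exact ⟨mem_insert_self v ρ, (erase_insert_subset v ρ).trans_ssubset hρ⟩

lemma isComplex_stackMove (hX : IsComplex X) (hσ : σ ∈ X) (hfacet : ∀ ρ ∈ X, σ ⊆ ρ → ρ = σ) :
    IsComplex (stackMove X σ v) := by
  intro γ hγ τ hτγ
  rcases mem_stackMove.mp hγ with ⟨hγX, hγσ⟩ | ⟨hvγ, hγσ⟩
  · refine mem_stackMove.mpr (Or.inl ⟨hX γ hγX τ hτγ, ?_⟩)
    rintro rfl
    exact hγσ (hfacet γ hγX hτγ)
  · have hτσ : τ.erase v ⊂ σ := (erase_subset_erase v hτγ).trans_ssubset hγσ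
    by_cases hvτ : v ∈ τ
    · exact mem_stackMove.mpr (Or.inr ⟨hvτ, hτσ⟩)
    · rw [erase_eq_of_notMem hvτ] at hτσ
      exact mem_stackMove.mpr (Or.inl ⟨hX σ hσ τ hτσ.subset, hτσ.ne⟩)

lemma AnticollapseStepOn.stackMove {G : Finset W} (hσ : σ ∈ X) (hvσ : v ∉ σ)
    (hG : insert v σ ⊆ G) :
    AnticollapseStepOn G (stackMove X σ v) (joinSimplex {v} (simplexOn σ) ∪ X) := by
  refine ⟨σ, insert v σ, hG, ssubset_insert hvσ, card_insert_of_notMem hvσ, ?_, ?_, ?_⟩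
  · rw [mem_stackMove]
    rintro (⟨-, hσσ⟩ | ⟨hvσ', -⟩)
    · exact hσσ rfl
    · exact hvσ hvσ'
  · intro ρ hρ hρcard hρσ
    obtain ⟨z, hz, rfl⟩ := exists_erase_eq_of_card_add_one hρ hρcard
    rcases mem_insert.mp hz with rfl | hzσ
    · exact absurd (erase_insert hvσ) hρσ
    · have hvσz : v ∉ σ.erase z := fun h => hvσ (mem_of_mem_erase h)
      rw [erase_insert_of_ne (ne_of_mem_of_not_mem hzσ hvσ).symm]
      exact mem_stackMove.mpr
        (Or.inr ⟨mem_insert_self v _, by rw [erase_insert hvσz]; exact erase_ssubset hzσ⟩)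
  · ext γ
    simp only [Set.mem_union, mem_stackMove, mem_joinSimplex, Set.mem_insert_iff,
      Set.mem_singleton_iff, singleton_subset_iff, sdiff_singleton_eq_erase, mem_simplexOn]
    by_cases hvγ : v ∈ γ
    · have hγσ : γ ≠ σ := by rintro rfl; exact hvσ hvγ
      rw [subset_iff_ssubset_or_eq, erase_eq_iff_eq_insert hvγ hvσ]
      tauto
    · have hγσ : γ ≠ insert v σ := by rintro rfl; exact hvγ (mem_insert_self v σ)
      by_cases hγ : γ = σ
      · subst hγ; tauto
      · tauto

lemma anticollapse_stackMove {V : Finset W} (hv : v ∉ V)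
    (hanti : ReflTransGen (AnticollapseStepOn V) X (simplexOn V)) (hσ : σ ∈ X) (hσV : σ ⊆ V)
    (hσne : σ.Nonempty) :
    ReflTransGen (AnticollapseStepOn (insert v V)) (stackMove X σ v) (simplexOn (insert v V)) := by
  have hbase : ReflTransGen (AnticollapseStepOn (insert v V))
      (joinSimplex {v} (simplexOn σ) ∪ X) (joinSimplex {v} (simplexOn σ) ∪ simplexOn V) := by
    simpa using hanti.union_joinSimplex (w := ∅) (disjoint_empty_left V) (by simp) (by simp)
      (fun α hα hcone => hv (hα (by simpa using hcone.1)))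
  refine .head (AnticollapseStepOn.stackMove hσ (fun h => hv (hσV h))
    (insert_subset_insert v hσV)) (hbase.trans ?_)
  rw [Set.union_comm, simplexOn_insert]
  exact (anticollapse_simplexOn_of_subset hσne hσV).simplexOn_union_cone hv

lemma not_isFreeFace_stackMove_of_mem (hfree : ¬ HasFreeFace X) (hvX : ∀ τ ∈ X, v ∉ τ)
    (hσ : σ ∈ X) {τ μ : Finset W} (hτ : τ ∈ X) (hτσ : τ ≠ σ) :
    ¬ IsFreeFace (stackMove X σ v) τ μ := by
  rintro ⟨-, hτne, hμ, hτμ, huniq⟩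
  have hvτ := hvX τ hτ
  have hcoface : ∀ γ ∈ X, γ ≠ σ → τ ⊂ γ → γ = μ := fun γ hγ hγσ =>
    huniq γ (mem_stackMove.mpr (Or.inl ⟨hγ, hγσ⟩))
  by_cases hτσ' : τ ⊆ σ
  · have hτσ' : τ ⊂ σ := ssubset_of_subset_of_ne hτσ' hτσ
    have hμ : insert v τ = μ := huniq _
      (mem_stackMove.mpr (Or.inr ⟨mem_insert_self v τ, by rwa [erase_insert hvτ]⟩))
      (ssubset_insert hvτ)
    refine hfree ⟨τ, σ, hτ, hτne, hσ, hτσ', fun γ hγ hτγ => by_contra fun hγσ => hvX γ hγ ?_⟩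
    rw [hcoface γ hγ hγσ hτγ, ← hμ]
    exact mem_insert_self v τ
  · rcases mem_stackMove.mp hμ with ⟨hμX, -⟩ | ⟨-, hμσ⟩
    · refine hfree ⟨τ, μ, hτ, hτne, hμX, hτμ, fun γ hγ hτγ => hcoface γ hγ ?_ hτγ⟩
      rintro rfl
      exact hτσ' hτγ.subset
    · exact hτσ' ((subset_erase.mpr ⟨hτμ.subset, hvτ⟩).trans hμσ.subset)

lemma not_isFreeFace_stackMove_of_apex_mem (hvX : ∀ τ ∈ X, v ∉ τ) (hvσ : v ∉ σ)
    {τ μ : Finset W} (hvτ : v ∈ τ) :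
    ¬ IsFreeFace (stackMove X σ v) τ μ := by
  rintro ⟨-, -, hμ, hτμ, huniq⟩
  have hvμ : v ∈ μ := hτμ.subset hvτ
  have hμσ : μ.erase v ⊂ σ := by
    rcases mem_stackMove.mp hμ with ⟨hμX, -⟩ | ⟨-, hμσ⟩
    · exact absurd hvμ (hvX μ hμX)
    · exact hμσ
  have hcoface : ∀ c ∉ τ, insert c (τ.erase v) ⊂ σ → insert c τ = μ := by
    intro c hcτ hc
    refine huniq _ (mem_stackMove.mpr (Or.inr ⟨mem_insert_of_mem hvτ, ?_⟩)) (ssubset_insert hcτ)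
    rwa [erase_insert_of_ne (ne_of_mem_of_not_mem hvτ hcτ).symm]
  -- `a ∈ μ \ τ` keeps `τ + b` a proper face of `σ` for any `b ∈ σ \ μ`, and `τ + b ≠ μ`
  obtain ⟨a, haμ, haτ⟩ := exists_of_ssubset hτμ
  obtain ⟨b, hbσ, hbμ⟩ := exists_of_ssubset hμσ
  have hbv : b ≠ v := ne_of_mem_of_not_mem hbσ hvσ
  have haμσ : a ∈ μ.erase v := mem_erase.mpr ⟨ne_of_mem_of_not_mem hvτ haτ |>.symm, haμ⟩
  have hτσ : τ.erase v ⊆ σ := (erase_subset_erase v hτμ.subset).trans hμσ.subset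
  have hbτσ : insert b (τ.erase v) ⊂ σ := by
    refine (ssubset_iff_of_subset (insert_subset hbσ hτσ)).mpr ⟨a, hμσ.subset haμσ, ?_⟩
    rw [mem_insert, not_or]
    exact ⟨ne_of_mem_of_not_mem haμσ hbμ, fun h => haτ (mem_of_mem_erase h)⟩
  have hbτ : b ∉ τ := fun h => hbμ (mem_erase.mpr ⟨hbv, hτμ.subset h⟩)
  apply hbμ
  rw [mem_erase, ← hcoface b hbτ hbτσ]
  exact ⟨hbv, mem_insert_self b τ⟩

lemma not_hasFreeFace_stackMove (hfree : ¬ HasFreeFace X) (hvX : ∀ τ ∈ X, v ∉ τ) (hσ : σ ∈ X) :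
    ¬ HasFreeFace (stackMove X σ v) := by
  rintro ⟨τ, μ, hτμ⟩
  rcases mem_stackMove.mp hτμ.1 with ⟨hτ, hτσ⟩ | ⟨hvτ, -⟩
  · exact not_isFreeFace_stackMove_of_mem hfree hvX hσ hτ hτσ hτμ
  · exact not_isFreeFace_stackMove_of_apex_mem hvX (hvX σ hσ) hvτ hτμ

end stackMove

end

theorem stmt_16_general {W : Type*} [DecidableEq W] (n : ℕ) (V : Finset W) (hV : V.card = n)
    (X : Set (Finset W)) (hX : IsComplex X) (hsub : ∀ τ ∈ X, τ ⊆ V)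
    (hvert : ∀ w ∈ V, ({w} : Finset W) ∈ X)
    (hfree : ¬ HasFreeFace X)
    (hanti : Relation.ReflTransGen (AnticollapseStepOn V) X (simplexOn V))
    (σ : Finset W) (hσ : σ ∈ X) (hfacet : ∀ ρ ∈ X, σ ⊆ ρ → ρ = σ)
    (hσdim : 2 ≤ σ.card) (v : W) (hv : v ∉ V) :
    IsComplex (stackMove X σ v) ∧
    (∀ τ ∈ stackMove X σ v, τ ⊆ insert v V) ∧
    (∀ w ∈ insert v V, ({w} : Finset W) ∈ stackMove X σ v) ∧
    (insert v V).card = n + 1 ∧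
    Relation.ReflTransGen (AnticollapseStepOn (insert v V)) (stackMove X σ v)
      (simplexOn (insert v V)) ∧
    ¬ HasFreeFace (stackMove X σ v) := by
  have hσV : σ ⊆ V := hsub σ hσ
  have hσne : σ.Nonempty := Finset.card_pos.mp (by omega)
  refine ⟨isComplex_stackMove hX hσ hfacet, ?_, ?_, by rw [Finset.card_insert_of_notMem hv, hV],
    anticollapse_stackMove hv hanti hσ hσV hσne,
    not_hasFreeFace_stackMove hfree (fun τ hτ hvτ => hv (hsub τ hτ hvτ)) hσ⟩
  · intro τ hτ
    rcases mem_stackMove.mp hτ with ⟨hτX, -⟩ | ⟨-, hτσ⟩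
    · exact (hsub τ hτX).trans (Finset.subset_insert v V)
    · exact Finset.subset_insert_iff.mpr (hτσ.subset.trans hσV)
  · intro w hw
    rcases Finset.mem_insert.mp hw with rfl | hwV
    · refine mem_stackMove.mpr (Or.inr ⟨Finset.mem_singleton_self w, ?_⟩)
      rwa [Finset.erase_singleton, Finset.empty_ssubset]
    · refine mem_stackMove.mpr (Or.inl ⟨hvert w hwV, ?_⟩)
      rintro rfl
      simp at hσdim

/-- Let `X` be a complex on `n` vertices (ground set `V`) of dimension `d` without free
faces that anticollapses to the simplex on `V`. Let `σ` be a facet of `X` of dimension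
at least `1` and `v` a new vertex. Then the complex obtained by deleting `σ` and adding
the cone with apex `v` over the boundary of `σ` is a simplicial complex on `n + 1`
vertices that anticollapses to the simplex on `V ∪ {v}` and has no free faces. -/
theorem stmt_16 {W : Type*} [DecidableEq W] (n d : ℕ) (V : Finset W) (hV : V.card = n)
    (X : Set (Finset W)) (hX : IsComplex X) (hsub : ∀ τ ∈ X, τ ⊆ V)
    (hvert : ∀ w ∈ V, ({w} : Finset W) ∈ X)
    (hdim : Dim X d) (hfree : ¬ HasFreeFace X)
    (hanti : Relation.ReflTransGen (AnticollapseStepOn V) X (simplexOn V))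
    (σ : Finset W) (hσ : σ ∈ X) (hfacet : ∀ ρ ∈ X, σ ⊆ ρ → ρ = σ)
    (hσdim : 2 ≤ σ.card) (v : W) (hv : v ∉ V) :
    IsComplex (stackMove X σ v) ∧
    (∀ τ ∈ stackMove X σ v, τ ⊆ insert v V) ∧
    (∀ w ∈ insert v V, ({w} : Finset W) ∈ stackMove X σ v) ∧
    (insert v V).card = n + 1 ∧
    Relation.ReflTransGen (AnticollapseStepOn (insert v V)) (stackMove X σ v)
      (simplexOn (insert v V)) ∧
    ¬ HasFreeFace (stackMove X σ v) :=
  stmt_16_general n V hV X hX hsub hvert hfree hanti σ hσ hfacet hσdim v hv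
end
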